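/- For all t ∈ (0,∞), x ∈ ℝ and h ∈ (0, (π/2)·exp(−(max(x,0))³)], it holds that ∫_c^∞ cos( h·exp((x + √t·y)³) ) · exp(−y²/2) dy ≤ 0, where c := ( (ln(π/(2h)))^{1/3} − x ) / √t. (Note that the constraint on h guarantees ln(π/(2h)) ≥ (max(x,0))³ ≥ 0, so the cube root is well defined.) -/

import Mathlib

/-!
Write `φ y = h * exp ((x + √t * y) ^ 3)` and `g y = exp (-y ^ 2 / 2)`. The lower limit `c` is the
point where `φ c = π / 2`, and `φ` is increasing and convex on `[c, ∞)`. For `a > c`, integrating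
`cos φ * g = (sin φ - 1)' * (g / φ')` by parts, with `sin φ - 1 ≤ 0` and `g / φ'` nonincreasing,
gives `∫_a^∞ cos φ * g ≤ (1 - sin (φ a)) * g a / φ' a`. Convexity gives
`1 - sin (φ a) ≤ (φ a - π / 2) ^ 2 / 2 ≤ (φ' a * (a - c)) ^ 2 / 2`, so the bound is
`O((a - c) ^ 2)`, and letting `a → c` proves the claim. The limit is needed because `φ' c = 0`
when `log (π / (2 * h)) = 0`.
-/

open Real MeasureTheory Set Filter Topology

theorem intervalIntegral_cos_mul_le {φ φ' φ'' g g' : ℝ → ℝ} {a b : ℝ} (hab : a ≤ b)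
    (hφ : ∀ y, HasDerivAt φ (φ' y) y) (hφ' : ∀ y, HasDerivAt φ' (φ'' y) y)
    (hg : ∀ y, HasDerivAt g (g' y) y) (hφ'' : Continuous φ'') (hg' : Continuous g')
    (hφ'_pos : ∀ y ∈ Icc a b, 0 < φ' y) (hgb : 0 ≤ g b)
    (hgφ' : ∀ y ∈ Icc a b, g' y * φ' y ≤ g y * φ'' y) :
    ∫ y in a..b, cos (φ y) * g y ≤ (1 - sin (φ a)) * g a / φ' a := by
  have hφ_cont : Continuous φ := continuous_iff_continuousAt.2 fun y ↦ (hφ y).continuousAt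
  have hφ'_cont : Continuous φ' := continuous_iff_continuousAt.2 fun y ↦ (hφ' y).continuousAt
  have hg_cont : Continuous g := continuous_iff_continuousAt.2 fun y ↦ (hg y).continuousAt
  set w' : ℝ → ℝ := fun y ↦ (g' y * φ' y - g y * φ'' y) / φ' y ^ 2
  have hw : ∀ y ∈ uIcc a b, HasDerivAt (fun y ↦ g y / φ' y) (w' y) y := fun y hy ↦
    (hg y).div (hφ' y) (hφ'_pos y (uIcc_of_le hab ▸ hy)).ne'
  have hw'c : ContinuousOn w' (uIcc a b) := by
    refine ((hg'.mul hφ'_cont).sub (hg_cont.mul hφ'')).continuousOn.div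
      (hφ'_cont.pow 2).continuousOn ?_
    exact fun y hy ↦ pow_ne_zero 2 (hφ'_pos y (uIcc_of_le hab ▸ hy)).ne'
  have hu'c : Continuous fun y ↦ cos (φ y) * φ' y := by fun_prop
  have hparts := intervalIntegral.integral_deriv_mul_eq_sub
    (fun y _ ↦ ((hφ y).sin).sub_const 1) hw (hu'c.intervalIntegrable a b) hw'c.intervalIntegrable
  have hI : ∫ y in a..b, cos (φ y) * φ' y * (g y / φ' y) = ∫ y in a..b, cos (φ y) * g y := by
    refine intervalIntegral.integral_congr fun y hy ↦ ?_
    have := (hφ'_pos y (uIcc_of_le hab ▸ hy)).ne'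
    field_simp
  have hrest_nonneg : 0 ≤ ∫ y in a..b, (sin (φ y) - 1) * w' y := by
    refine intervalIntegral.integral_nonneg hab fun y hy ↦ ?_
    refine mul_nonneg_of_nonpos_of_nonpos (by linarith [sin_le_one (φ y)]) ?_
    exact div_nonpos_of_nonpos_of_nonneg (by linarith [hgφ' y hy]) (sq_nonneg _)
  have hboundary : (sin (φ b) - 1) * (g b / φ' b) ≤ 0 :=
    mul_nonpos_of_nonpos_of_nonneg (by linarith [sin_le_one (φ b)])
      (div_nonneg hgb (hφ'_pos b (right_mem_Icc.2 hab)).le)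
  have hwc : ContinuousOn (fun y ↦ g y / φ' y) (uIcc a b) := fun y hy ↦
    (hw y hy).continuousAt.continuousWithinAt
  have hmain_cont : ContinuousOn (fun y ↦ cos (φ y) * φ' y * (g y / φ' y)) (uIcc a b) :=
    hu'c.continuousOn.mul hwc
  have hrest_cont : ContinuousOn (fun y ↦ (sin (φ y) - 1) * w' y) (uIcc a b) :=
    (by fun_prop : Continuous fun y ↦ sin (φ y) - 1).continuousOn.mul hw'c
  rw [intervalIntegral.integral_add hmain_cont.intervalIntegrable hrest_cont.intervalIntegrable,
    hI] at hparts
  have : (1 - sin (φ a)) * g a / φ' a = -((sin (φ a) - 1) * (g a / φ' a)) := by ring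
  linarith

theorem setIntegral_Ioi_cos_mul_le {φ φ' φ'' g g' : ℝ → ℝ} {a : ℝ}
    (hφ : ∀ y, HasDerivAt φ (φ' y) y) (hφ' : ∀ y, HasDerivAt φ' (φ'' y) y)
    (hg : ∀ y, HasDerivAt g (g' y) y) (hφ'' : Continuous φ'') (hg' : Continuous g')
    (hφ'_pos : ∀ y ∈ Ici a, 0 < φ' y) (hg_nonneg : ∀ y ∈ Ici a, 0 ≤ g y)
    (hgφ' : ∀ y ∈ Ici a, g' y * φ' y ≤ g y * φ'' y)
    (hint : IntegrableOn (fun y ↦ cos (φ y) * g y) (Ioi a)) :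
    ∫ y in Ioi a, cos (φ y) * g y ≤ (1 - sin (φ a)) * g a / φ' a := by
  refine le_of_tendsto (intervalIntegral_tendsto_integral_Ioi a hint tendsto_id) ?_
  filter_upwards [eventually_ge_atTop a] with b hab
  exact intervalIntegral_cos_mul_le hab hφ hφ' hg hφ'' hg' (fun y hy ↦ hφ'_pos y hy.1)
    (hg_nonneg b hab) fun y hy ↦ hgφ' y hy.1

theorem one_sub_sin_le_sq_of_hasDerivAt {φ φ' : ℝ → ℝ} {c a : ℝ} (hca : c < a)
    (hφ : ∀ y, HasDerivAt φ (φ' y) y) (hφc : φ c = π / 2)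
    (hφ' : ∀ y ∈ Ioo c a, 0 ≤ φ' y ∧ φ' y ≤ φ' a) :
    1 - sin (φ a) ≤ (φ' a * (a - c)) ^ 2 / 2 := by
  obtain ⟨ξ, hξ, hslope⟩ := exists_hasDerivAt_eq_slope φ φ' hca
    (continuous_iff_continuousAt.2 fun y ↦ (hφ y).continuousAt).continuousOn fun y _ ↦ hφ y
  rw [eq_div_iff (sub_pos.2 hca).ne'] at hslope
  have hlow : 0 ≤ φ a - π / 2 := by nlinarith [(hφ' ξ hξ).1]
  have hup : φ a - π / 2 ≤ φ' a * (a - c) := by nlinarith [(hφ' ξ hξ).2]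
  calc 1 - sin (φ a) ≤ (φ a - π / 2) ^ 2 / 2 := by
        linarith [cos_sub_pi_div_two (φ a) ▸ one_sub_sq_div_two_le_cos (x := φ a - π / 2)]
    _ ≤ (φ' a * (a - c)) ^ 2 / 2 := by gcongr

theorem setIntegral_Ioi_nonpos_of_le {f B : ℝ → ℝ} {c : ℝ} (hf : IntegrableOn f (Ioi c))
    (hB : Tendsto B (𝓝[>] c) (𝓝 0)) (hfB : ∀ a, c < a → ∫ y in Ioi a, f y ≤ B a) :
    ∫ y in Ioi c, f y ≤ 0 := by
  have hprim : Tendsto (fun a ↦ ∫ y in c..a, f y) (𝓝[>] c) (𝓝 0) := by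
    have hc : c ≤ c + 1 := by linarith
    have hcont := intervalIntegral.continuousOn_primitive_interval' (a := c)
      ((intervalIntegrable_iff_integrableOn_Ioc_of_le hc).2 (hf.mono_set Ioc_subset_Ioi_self))
      left_mem_uIcc c left_mem_uIcc
    have hmem : uIcc c (c + 1) ∈ 𝓝[>] c := uIcc_of_le hc ▸ Icc_mem_nhdsGT (by linarith)
    simpa using hcont.tendsto.mono_left (nhdsWithin_le_of_mem hmem)
  have htail : Tendsto (fun a ↦ ∫ y in Ioi a, f y) (𝓝[>] c) (𝓝 (∫ y in Ioi c, f y)) := by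
    have := (tendsto_const_nhds (x := ∫ y in Ioi c, f y)).sub hprim
    rw [sub_zero] at this
    refine this.congr' ?_
    filter_upwards [self_mem_nhdsWithin] with a ha
    rw [← intervalIntegral.integral_Ioi_sub_Ioi hf (le_of_lt ha), sub_sub_cancel]
  exact le_of_tendsto_of_tendsto htail hB (eventually_mem_nhdsWithin.mono hfB)

theorem hasDerivAt_exp_neg_sq_div_two (y : ℝ) :
    HasDerivAt (fun y ↦ exp (-y ^ 2 / 2)) (-y * exp (-y ^ 2 / 2)) y := by
  have : HasDerivAt (fun y : ℝ ↦ -y ^ 2 / 2) (-y) y :=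
    ((hasDerivAt_pow 2 y).neg.div_const 2).congr_deriv (by ring)
  simpa [mul_comm] using this.exp

theorem integrable_cos_comp_mul_exp_neg_sq_div_two {φ : ℝ → ℝ} (hφ : Continuous φ) :
    Integrable fun y ↦ cos (φ y) * exp (-y ^ 2 / 2) := by
  have hg : Integrable fun y : ℝ ↦ exp (-y ^ 2 / 2) := by
    simpa [div_eq_inv_mul, neg_mul] using integrable_exp_neg_mul_sq (b := 1 / 2) (by norm_num)
  exact hg.bdd_mul (c := 1) (continuous_cos.comp hφ).aestronglyMeasurable
    (Eventually.of_forall fun y ↦ by simpa using abs_cos_le_one (φ y))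

noncomputable def cubicPhase (h x r y : ℝ) : ℝ := h * exp ((x + r * y) ^ 3)

noncomputable def cubicPhaseDeriv (h x r y : ℝ) : ℝ := 3 * r * (x + r * y) ^ 2 * cubicPhase h x r y

noncomputable def cubicPhaseDeriv2 (h x r y : ℝ) : ℝ :=
  3 * r ^ 2 * (2 * (x + r * y) + 3 * (x + r * y) ^ 4) * cubicPhase h x r y

section CubicPhase

variable (h x r : ℝ)

theorem hasDerivAt_add_mul (y : ℝ) : HasDerivAt (fun y ↦ x + r * y) r y := by
  simpa using ((hasDerivAt_id y).const_mul r).const_add x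

theorem hasDerivAt_cubicPhase (y : ℝ) :
    HasDerivAt (cubicPhase h x r) (cubicPhaseDeriv h x r y) y :=
  (((hasDerivAt_add_mul x r y).fun_pow 3).exp.const_mul h).congr_deriv <| by
    simp only [cubicPhaseDeriv, cubicPhase]; ring

theorem hasDerivAt_cubicPhaseDeriv (y : ℝ) :
    HasDerivAt (cubicPhaseDeriv h x r) (cubicPhaseDeriv2 h x r y) y :=
  ((((hasDerivAt_add_mul x r y).fun_pow 2).const_mul (3 * r)).mul
    (hasDerivAt_cubicPhase h x r y)).congr_deriv <| by
    simp only [cubicPhaseDeriv2, cubicPhaseDeriv]; ring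

theorem continuous_cubicPhase : Continuous (cubicPhase h x r) := by
  unfold cubicPhase; fun_prop

theorem continuous_cubicPhaseDeriv2 : Continuous (cubicPhaseDeriv2 h x r) := by
  unfold cubicPhaseDeriv2 cubicPhase; fun_prop

variable {h x r}

theorem cubicPhaseDeriv_le_cubicPhaseDeriv (hh : 0 ≤ h) (hr : 0 ≤ r) {y z : ℝ}
    (hy : 0 ≤ x + r * y) (hyz : y ≤ z) : cubicPhaseDeriv h x r y ≤ cubicPhaseDeriv h x r z := by
  have : x + r * y ≤ x + r * z := by gcongr
  unfold cubicPhaseDeriv cubicPhase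
  gcongr

theorem cubicPhaseDeriv_pos (hh : 0 < h) (hr : 0 < r) {y : ℝ} (hy : 0 < x + r * y) :
    0 < cubicPhaseDeriv h x r y := by
  unfold cubicPhaseDeriv cubicPhase; positivity

theorem cubicPhaseDeriv2_nonneg (hh : 0 ≤ h) {y : ℝ} (hy : 0 ≤ x + r * y) :
    0 ≤ cubicPhaseDeriv2 h x r y := by
  unfold cubicPhaseDeriv2 cubicPhase; positivity

theorem setIntegral_Ioi_cos_cubicPhase_mul_exp_le {c a : ℝ} (hh : 0 < h) (hr : 0 < r)
    (hc : 0 ≤ c) (hxc : 0 ≤ x + r * c) (hφc : cubicPhase h x r c = π / 2) (hca : c < a) :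
    ∫ y in Ioi a, cos (cubicPhase h x r y) * exp (-y ^ 2 / 2) ≤
      exp (-a ^ 2 / 2) * cubicPhaseDeriv h x r a * (a - c) ^ 2 / 2 := by
  have hs : ∀ y, c < y → 0 < x + r * y := fun y hy ↦ by nlinarith
  have hφ'_pos : ∀ y, c < y → 0 < cubicPhaseDeriv h x r y := fun y hy ↦
    cubicPhaseDeriv_pos hh hr (hs y hy)
  have hsign : ∀ y ∈ Ici a, -y * exp (-y ^ 2 / 2) * cubicPhaseDeriv h x r y ≤
      exp (-y ^ 2 / 2) * cubicPhaseDeriv2 h x r y := fun y hy ↦ by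
    have hcy : c < y := hca.trans_le hy
    have hy0 : 0 ≤ y := hc.trans hcy.le
    nlinarith [mul_nonneg (mul_nonneg hy0 (exp_pos (-y ^ 2 / 2)).le) (hφ'_pos y hcy).le,
      mul_nonneg (exp_pos (-y ^ 2 / 2)).le (cubicPhaseDeriv2_nonneg hh.le (hs y hcy).le)]
  calc _ ≤ (1 - sin (cubicPhase h x r a)) * exp (-a ^ 2 / 2) / cubicPhaseDeriv h x r a :=
        setIntegral_Ioi_cos_mul_le (hasDerivAt_cubicPhase h x r)
          (hasDerivAt_cubicPhaseDeriv h x r) hasDerivAt_exp_neg_sq_div_two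
          (continuous_cubicPhaseDeriv2 h x r) (by fun_prop)
          (fun y hy ↦ hφ'_pos y (hca.trans_le hy)) (fun y _ ↦ (exp_pos _).le) hsign
          (integrable_cos_comp_mul_exp_neg_sq_div_two (continuous_cubicPhase h x r)).integrableOn
    _ ≤ (cubicPhaseDeriv h x r a * (a - c)) ^ 2 / 2 * exp (-a ^ 2 / 2) /
          cubicPhaseDeriv h x r a := by
        refine div_le_div_of_nonneg_right (mul_le_mul_of_nonneg_right ?_ (exp_pos _).le)
          (hφ'_pos a hca).le
        exact one_sub_sin_le_sq_of_hasDerivAt hca (hasDerivAt_cubicPhase h x r) hφc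
          fun y hy ↦ ⟨(hφ'_pos y hy.1).le,
            cubicPhaseDeriv_le_cubicPhaseDeriv hh.le hr.le (hs y hy.1).le hy.2.le⟩
    _ = exp (-a ^ 2 / 2) * cubicPhaseDeriv h x r a * (a - c) ^ 2 / 2 := by
        field_simp [(hφ'_pos a hca).ne']

end CubicPhase

theorem pow_three_le_log_of_le_mul_exp {M h : ℝ} (hh : 0 < h)
    (hM : h ≤ π / 2 * exp (-M ^ 3)) : M ^ 3 ≤ log (π / (2 * h)) := by
  rw [le_log_iff_exp_le (by positivity), le_div_iff₀ (by positivity)]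
  rw [exp_neg, ← div_eq_mul_inv, le_div_iff₀ (exp_pos _)] at hM
  linarith

theorem integral_cos_exp_cube_mul_gaussian_nonpos
    (t x h : ℝ) (ht : 0 < t) (hh : 0 < h)
    (hh' : h ≤ (π / 2) * Real.exp (-(max x 0) ^ 3)) :
    ∫ y in Set.Ioi (((Real.log (π / (2 * h))) ^ ((1:ℝ)/3) - x) / Real.sqrt t),
        Real.cos (h * Real.exp ((x + Real.sqrt t * y) ^ 3)) * Real.exp (-y ^ 2 / 2) ≤ 0 := by
  set L := log (π / (2 * h))
  have hML : max x 0 ^ 3 ≤ L := pow_three_le_log_of_le_mul_exp hh hh'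
  have hL : 0 ≤ L := (by positivity : (0:ℝ) ≤ max x 0 ^ 3).trans hML
  set s₀ := L ^ ((1 : ℝ) / 3)
  have hs₀ : s₀ ^ 3 = L := by simp only [s₀, one_div]; exact rpow_inv_natCast_pow hL (by norm_num)
  have hMs₀ : max x 0 ≤ s₀ := le_of_pow_le_pow_left₀ (by norm_num) (rpow_nonneg hL _) (hs₀ ▸ hML)
  have hr : 0 < √t := sqrt_pos.2 ht
  set c := (s₀ - x) / √t
  have hsc : x + √t * c = s₀ := by simp only [c]; field_simp; ring
  have hφc : cubicPhase h x √t c = π / 2 := by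
    rw [cubicPhase, hsc, hs₀, exp_log (by positivity)]; field_simp
  have hc : 0 ≤ c := div_nonneg (by linarith [le_max_left x 0]) hr.le
  refine setIntegral_Ioi_nonpos_of_le
    (integrable_cos_comp_mul_exp_neg_sq_div_two (continuous_cubicPhase h x √t)).integrableOn ?_
    fun a hca ↦ setIntegral_Ioi_cos_cubicPhase_mul_exp_le hh hr hc
      (hsc ▸ (le_max_right x 0).trans hMs₀) hφc hca
  have hB : Continuous fun a ↦ exp (-a ^ 2 / 2) * cubicPhaseDeriv h x √t a * (a - c) ^ 2 / 2 := by
    unfold cubicPhaseDeriv cubicPhase; fun_prop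
  simpa using (hB.tendsto c).mono_left nhdsWithin_le_nhds
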